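/- arXiv:2209.13373 — 7 statements merged into one kernel-verified Lean document; each statement's English description precedes it below -/
import Mathlib

section
/- Let X be a mixing subshift of finite type, let Y ⊆ X be a subshift, and let g : Y → X be any continuous shift-commuting map. Then there exists a cellular automaton h : X → X with h|_Y = g. -/
/-- The shift map on the full shift `A^ℤ`: `σ(x)_i = x_{i+1}`. -/
def shiftMap {A : Type*} (x : ℤ → A) : ℤ → A := fun i => x (i + 1)

/-- A cellular automaton on the full shift `A^ℤ` (with the product topology,
`A` discrete): a continuous map commuting with the shift. -/
def IsCA {A : Type*} [TopologicalSpace A] (f : (ℤ → A) → (ℤ → A)) : Prop :=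
  Continuous f ∧ ∀ x, f (shiftMap x) = shiftMap (f x)

/-- `f` is von Neumann regular in the monoid `End(A^ℤ)` of cellular automata:
there is a CA `h` with `f ∘ h ∘ f = f` and `h ∘ f ∘ h = h`. -/
def IsRegularCA {A : Type*} [TopologicalSpace A] (f : (ℤ → A) → (ℤ → A)) : Prop :=
  ∃ h : (ℤ → A) → (ℤ → A), IsCA h ∧ f ∘ h ∘ f = f ∧ h ∘ f ∘ h = h

/-- A subshift: a closed, shift-invariant subset of the full shift. -/
def IsSubshift {A : Type*} [TopologicalSpace A] (X : Set (ℤ → A)) : Prop :=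
  IsClosed X ∧ shiftMap '' X = X

/-- The finite word `w` occurs as a subword of the bi-infinite sequence `x`. -/
def occursIn {A : Type*} (w : List A) (x : ℤ → A) : Prop :=
  ∃ i : ℤ, ∀ k : Fin w.length, x (i + (k.val : ℤ)) = w.get k

/-- A subshift of finite type: the set of points avoiding a finite set `F` of
forbidden finite words. -/
def IsSFT {A : Type*} (X : Set (ℤ → A)) : Prop :=
  ∃ F : Set (List A), F.Finite ∧ X = {x | ∀ w ∈ F, ¬ occursIn w x}

/-- The language of a subshift: the finite words occurring in its points. -/
def lang {A : Type*} (X : Set (ℤ → A)) : Set (List A) :=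
  {w | ∃ x ∈ X, occursIn w x}

/-- `X` is mixing: for all words `u, v` in the language of `X` there is `N` such
that for every `n ≥ N` some word `u w v` with `|w| = n` is in the language. -/
def IsMixing {A : Type*} (X : Set (ℤ → A)) : Prop :=
  ∀ u ∈ lang X, ∀ v ∈ lang X, ∃ N : ℕ, ∀ n : ℕ, N ≤ n →
    ∃ w : List A, w.length = n ∧ (u ++ w ++ v) ∈ lang X

/-- A cellular automaton on the subshift `X`: a map `X → X` (presented as a map
of the ambient full shift restricted to `X`) that is continuous on `X` and
commutes with the shift on `X`. -/
def IsCAOn {A : Type*} [TopologicalSpace A] (X : Set (ℤ → A))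
    (f : (ℤ → A) → (ℤ → A)) : Prop :=
  Set.MapsTo f X X ∧ ContinuousOn f X ∧ ∀ x ∈ X, f (shiftMap x) = shiftMap (f x)

/-- `f` is von Neumann regular as an element of the monoid `End(X)` of cellular
automata on `X`: there is a CA `h` on `X` with `f∘h∘f = f` and `h∘f∘h = h` as
maps on `X`. -/
def IsRegularCAOn {A : Type*} [TopologicalSpace A] (X : Set (ℤ → A))
    (f : (ℤ → A) → (ℤ → A)) : Prop :=
  ∃ h : (ℤ → A) → (ℤ → A), IsCAOn X h ∧
    (∀ x ∈ X, f (h (f x)) = f x) ∧ (∀ x ∈ X, h (f (h x)) = h x)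


/-!
By Curtis–Hedlund–Lyndon, `g` is given on `Y` by a local rule `φ`. Let `m` bound the lengths of
the forbidden words of `X` and let `N` be a mixing gap that works uniformly for all pairs of
words of length `m`. Call a position of `x` active if `x` looks like a point of `Y` on a long
enough stretch around it. The extension applies `φ` at active positions and copies `x`
elsewhere, except that the first and the last `N` symbols of every inactive gap are replaced by
mixing words joining the length-`m` blocks on either side. Active runs have length at least `m`
and inactive gaps are longer than `2 (N + m)`, so every length-`m` window of the result is a
window of `g y` for some `y ∈ Y`, of `x`, or of a glued word; hence the result lies in `X`. The
rule is local and does not depend on the position, so it is a cellular automaton, and on `Y`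
every position is active, so it agrees with `g` there.
-/
open Set Filter Topology

lemma iff_of_forall_iff_succ {p : ℤ → Prop} {j : ℤ} {L : ℕ}
    (h : ∀ k : ℕ, k + 1 < L → (p (j + k + 1) ↔ p (j + k))) :
    ∀ k : ℕ, k < L → (p (j + k) ↔ p j) := by
  intro k hk
  induction k with
  | zero => simp
  | succ k ih => rw [Nat.cast_succ, ← add_assoc, h k hk, ih (by omega)]

section Cylinders

variable {ι A B : Type*} [TopologicalSpace A]

lemma setOf_eqOn_mem_nhds [DiscreteTopology A] {s : Set ι} (hs : s.Finite) (c : ι → A) :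
    {z | EqOn z c s} ∈ 𝓝 c := by
  rw [nhds_pi, Filter.mem_pi]
  exact ⟨s, hs, fun i => {c i}, fun i => by simp, fun z hz i hi => hz i hi⟩

lemma continuous_of_eqOn [DiscreteTopology A] [TopologicalSpace B] {s : Set ι} (hs : s.Finite)
    {f : (ι → A) → B} (hf : ∀ x x', EqOn x x' s → f x = f x') : Continuous f :=
  continuous_iff_continuousAt.2 fun c =>
    tendsto_nhds_of_eventually_eq <| mem_of_superset (setOf_eqOn_mem_nhds hs c)
      fun _ hz => hf _ _ hz

lemma exists_setOf_eqOn_Icc_subset {c : ℤ → A} {O : Set (ℤ → A)} (hO : O ∈ 𝓝 c) :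
    ∃ n : ℕ, {z | EqOn z c (Icc (-n : ℤ) n)} ⊆ O := by
  rw [nhds_pi, Filter.mem_pi] at hO
  obtain ⟨I, hI, t, ht, hIO⟩ := hO
  obtain ⟨n, hn⟩ := (hI.image Int.natAbs).bddAbove
  refine ⟨n, fun z hz => hIO fun i hi => ?_⟩
  have : i.natAbs ≤ n := hn (mem_image_of_mem _ hi)
  rw [hz ⟨by omega, by omega⟩]
  exact mem_of_mem_nhds (ht i)

lemma IsCompact.exists_eqOn_Icc_imp_eq [DiscreteTopology A] [TopologicalSpace B]
    [DiscreteTopology B] {Y : Set (ℤ → A)} (hY : IsCompact Y) {f : (ℤ → A) → B}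
    (hf : ContinuousOn f Y) :
    ∃ r : ℕ, ∀ y ∈ Y, ∀ y' ∈ Y, EqOn y y' (Icc (-r : ℤ) r) → f y = f y' := by
  have hloc : ∀ c ∈ Y, ∃ n : ℕ, ∀ y ∈ Y, EqOn y c (Icc (-n : ℤ) n) → f y = f c := by
    intro c hc
    obtain ⟨O, hO, hOY⟩ := mem_nhdsWithin_iff_exists_mem_nhds_inter.1
      (hf c hc (isOpen_discrete {f c} |>.mem_nhds rfl))
    obtain ⟨n, hn⟩ := exists_setOf_eqOn_Icc_subset hO
    exact ⟨n, fun y hy hyc => hOY ⟨hn hyc, hy⟩⟩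
  choose n hn using hloc
  obtain ⟨t, ht⟩ := hY.elim_nhds_subcover' (fun c hc => {z | EqOn z c (Icc (-n c hc : ℤ) (n c hc))})
    fun c hc => setOf_eqOn_mem_nhds (finite_Icc _ _) c
  refine ⟨t.sup fun c : Y => n c c.2, fun y hy y' hy' hyy' => ?_⟩
  obtain ⟨c, hct, hyc⟩ := mem_iUnion₂.1 (ht hy)
  have hnc : n c c.2 ≤ t.sup fun c : Y => n c c.2 := Finset.le_sup (f := fun c : Y => n c c.2) hct
  have hyc' : EqOn y' c (Icc (-n c c.2 : ℤ) (n c c.2)) := fun i hi =>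
    (hyy' ⟨by have := hi.1; omega, by have := hi.2; omega⟩).symm.trans (hyc hi)
  exact (hn c c.2 y hy hyc).trans (hn c c.2 y' hy' hyc').symm

end Cylinders

section Shifts

variable {A : Type*}

def shiftBy (n : ℤ) (x : ℤ → A) : ℤ → A := fun i => x (i + n)

lemma shiftBy_shiftBy (a b : ℤ) (x : ℤ → A) : shiftBy a (shiftBy b x) = shiftBy (a + b) x := by
  funext i
  simp only [shiftBy, add_assoc]

lemma shiftBy_zero (x : ℤ → A) : shiftBy 0 x = x := by
  funext i
  simp [shiftBy]

lemma shiftBy_one (x : ℤ → A) : shiftBy 1 x = shiftMap x := rfl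

lemma shiftBy_neg_one_shiftMap (x : ℤ → A) : shiftBy (-1) (shiftMap x) = x := by
  rw [← shiftBy_one, shiftBy_shiftBy, neg_add_cancel, shiftBy_zero]

lemma IsSubshift.shiftBy_mem [TopologicalSpace A] {Y : Set (ℤ → A)} (hY : IsSubshift Y)
    {y : ℤ → A} (hy : y ∈ Y) (n : ℤ) : shiftBy n y ∈ Y := by
  induction n using Int.induction_on with
  | zero => rwa [shiftBy_zero]
  | succ n ih =>
    rw [add_comm, ← shiftBy_shiftBy, shiftBy_one, ← hY.2]
    exact mem_image_of_mem _ ih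
  | pred n ih =>
    rw [← hY.2] at ih
    obtain ⟨y', hy', hy'n⟩ := ih
    rwa [sub_eq_neg_add, ← shiftBy_shiftBy, ← hy'n, shiftBy_neg_one_shiftMap]

lemma map_shiftBy_of_map_shiftMap [TopologicalSpace A] {Y : Set (ℤ → A)} (hY : IsSubshift Y)
    {g : (ℤ → A) → (ℤ → A)} (hg : ∀ y ∈ Y, g (shiftMap y) = shiftMap (g y))
    {y : ℤ → A} (hy : y ∈ Y) (n : ℤ) : g (shiftBy n y) = shiftBy n (g y) := by
  induction n using Int.induction_on with
  | zero => rw [shiftBy_zero, shiftBy_zero]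
  | succ n ih =>
    rw [add_comm, ← shiftBy_shiftBy, ← shiftBy_shiftBy, shiftBy_one, shiftBy_one,
      hg _ (hY.shiftBy_mem hy n), ih]
  | pred n ih =>
    have h := hg _ (hY.shiftBy_mem hy (-n - 1))
    rw [← shiftBy_one, shiftBy_shiftBy, add_sub_cancel, ih] at h
    calc g (shiftBy (-n - 1) y) = shiftBy (-1) (shiftMap (g (shiftBy (-n - 1) y))) :=
          (shiftBy_neg_one_shiftMap _).symm
      _ = shiftBy (-n - 1) (g y) := by rw [← h, shiftBy_shiftBy, neg_add_eq_sub]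

lemma IsSubshift.exists_localRule [TopologicalSpace A] [Finite A] [DiscreteTopology A]
    {Y : Set (ℤ → A)} (hY : IsSubshift Y) {g : (ℤ → A) → (ℤ → A)} (hgc : ContinuousOn g Y)
    (hg : ∀ y ∈ Y, g (shiftMap y) = shiftMap (g y)) :
    ∃ r : ℕ, ∃ φ : (ℤ → A) → A, (∀ z z', EqOn z z' (Icc (-r : ℤ) r) → φ z = φ z') ∧
      ∀ y ∈ Y, ∀ i, g y i = φ (shiftBy i y) := by
  classical
  obtain ⟨r, hr⟩ := hY.1.isCompact.exists_eqOn_Icc_imp_eq (f := fun y => g y 0)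
    ((continuous_apply 0).comp_continuousOn hgc)
  let Near (z : ℤ → A) := ∃ y ∈ Y, EqOn y z (Icc (-r : ℤ) r)
  refine ⟨r, fun z => if h : Near z then g h.choose 0 else z 0, fun z z' hzz' => ?_,
    fun y hy i => ?_⟩
  · have hnear : Near z ↔ Near z' :=
      ⟨fun ⟨y, hy, hyz⟩ => ⟨y, hy, hyz.trans hzz'⟩,
        fun ⟨y, hy, hyz'⟩ => ⟨y, hy, hyz'.trans hzz'.symm⟩⟩
    by_cases h : Near z
    · have h' := hnear.1 h
      simp only [dif_pos h, dif_pos h']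
      exact hr _ h.choose_spec.1 _ h'.choose_spec.1
        (h.choose_spec.2.trans (hzz'.trans h'.choose_spec.2.symm))
    · simp only [dif_neg h, dif_neg (hnear.not.1 h)]
      exact hzz' ⟨by omega, by omega⟩
  · have h : Near (shiftBy i y) := ⟨shiftBy i y, hY.shiftBy_mem hy i, eqOn_refl _ _⟩
    simp only [dif_pos h]
    rw [hr _ h.choose_spec.1 _ (hY.shiftBy_mem hy i) h.choose_spec.2,
      map_shiftBy_of_map_shiftMap hY hg hy]
    simp [shiftBy]

lemma eqOn_shiftBy_of_eqOn {x x' : ℤ → A} {i i' j j' K L : ℤ}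
    (h : EqOn (shiftBy i x) (shiftBy i' x') (Icc (-K) K)) (hj : j - i = j' - i')
    (h₁ : -K ≤ j - i - L) (h₂ : j - i + L ≤ K) :
    EqOn (shiftBy j x) (shiftBy j' x') (Icc (-L) L) := by
  intro t ht
  have := h (show t + (j - i) ∈ Icc (-K) K from ⟨by linarith [ht.1], by linarith [ht.2]⟩)
  simp only [shiftBy] at this ⊢
  convert this using 2 <;> omega

end Shifts

section Segments

variable {A : Type*}

def SegmentIn (X : Set (ℤ → A)) (z : ℤ → A) (s : ℤ) (L : ℕ) : Prop :=
  ∃ x ∈ X, ∃ c : ℤ, ∀ k : ℕ, k < L → z (s + k) = x (c + k)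

variable {X : Set (ℤ → A)} {z z' : ℤ → A} {s : ℤ} {L : ℕ}

lemma SegmentIn.mono (h : SegmentIn X z s L) {s' : ℤ} {L' : ℕ} (hs : s ≤ s')
    (hL : s' + L' ≤ s + L) : SegmentIn X z s' L' := by
  obtain ⟨x, hx, c, hc⟩ := h
  refine ⟨x, hx, c + (s' - s), fun k hk => ?_⟩
  have := hc ((s' - s).toNat + k) (by omega)
  push_cast at this
  convert this using 2 <;> omega

lemma SegmentIn.congr (h : SegmentIn X z s L) (hzz' : ∀ k : ℕ, k < L → z (s + k) = z' (s + k)) :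
    SegmentIn X z' s L :=
  let ⟨x, hx, c, hc⟩ := h
  ⟨x, hx, c, fun k hk => (hzz' k hk).symm.trans (hc k hk)⟩

lemma SegmentIn.ofFn_mem_lang (h : SegmentIn X z s L) :
    List.ofFn (fun k : Fin L => z (s + k)) ∈ lang X := by
  obtain ⟨x, hx, c, hc⟩ := h
  refine ⟨x, hx, c, fun k => ?_⟩
  have hk : (k : ℕ) < L := by simpa using k.isLt
  simp [hc k hk]

lemma segmentIn_of_mem_lang {w : List A} (hw : w ∈ lang X)
    (hz : ∀ k (hk : k < w.length), z (s + k) = w[k]) : SegmentIn X z s w.length := by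
  obtain ⟨x, hx, c, hc⟩ := hw
  exact ⟨x, hx, c, fun k hk => (hz k hk).trans (hc ⟨k, hk⟩).symm⟩

lemma mem_of_forall_segmentIn {F : Set (List A)} (hXF : X = {x | ∀ w ∈ F, ¬ occursIn w x})
    (hF : ∀ w ∈ F, w.length ≤ L) (hz : ∀ j, SegmentIn X z j L) : z ∈ X := by
  rw [hXF]
  rintro w hw ⟨i, hi⟩
  obtain ⟨x, hx, c, hc⟩ := hz i
  rw [hXF] at hx
  exact hx w hw ⟨c, fun k => (hc k (by have := hF w hw; omega)).symm.trans (hi k)⟩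

lemma IsSFT.exists_segmentIn_length (hX : IsSFT X) :
    ∃ m, 1 ≤ m ∧ ∀ z, (∀ j, SegmentIn X z j m) → z ∈ X := by
  obtain ⟨F, hF, hXF⟩ := hX
  obtain ⟨b, hb⟩ := (hF.image List.length).bddAbove
  exact ⟨max b 1, le_max_right _ _, fun z hz => mem_of_forall_segmentIn hXF
    (fun w hw => (hb (mem_image_of_mem _ hw)).trans (le_max_left _ _)) hz⟩

lemma IsMixing.exists_glue [Finite A] (hX : IsMixing X) (m : ℕ) :
    ∃ N, 1 ≤ N ∧ ∃ glue : List A → List A → List A, ∀ u ∈ lang X, ∀ v ∈ lang X,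
      u.length = m → v.length = m → (glue u v).length = N ∧ u ++ glue u v ++ v ∈ lang X := by
  set I := {p : List A × List A | p.1 ∈ lang X ∧ p.2 ∈ lang X ∧ p.1.length = m ∧ p.2.length = m}
  have hI : I.Finite := ((List.finite_length_eq A m).prod (List.finite_length_eq A m)).subset
    fun p hp => ⟨hp.2.2.1, hp.2.2.2⟩
  have hev : ∀ᶠ n in atTop, ∀ p ∈ I, ∃ w : List A, w.length = n ∧ p.1 ++ w ++ p.2 ∈ lang X :=
    (eventually_all_finite hI).2 fun p hp => eventually_atTop.2 (hX p.1 hp.1 p.2 hp.2.1)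
  obtain ⟨N, hN, hN1⟩ := (hev.and (eventually_ge_atTop 1)).exists
  choose! glue hglue using fun u v (h : (u, v) ∈ I) => hN (u, v) h
  exact ⟨N, hN1, glue, fun u hu v hv hum hvm => hglue u v ⟨hu, hv, hum, hvm⟩⟩

end Segments

structure GluingData {A : Type*} (X : Set (ℤ → A)) where
  Y : Set (ℤ → A)
  φ : (ℤ → A) → A
  r : ℕ
  m : ℕ
  N : ℕ
  glue : List A → List A → List A
  one_le_m : 1 ≤ m
  one_le_N : 1 ≤ N
  mem_of_segmentIn : ∀ z, (∀ j, SegmentIn X z j m) → z ∈ X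
  φ_local : ∀ z z', EqOn z z' (Icc (-r : ℤ) r) → φ z = φ z'
  sliding_mem : ∀ y ∈ Y, (fun i => φ (shiftBy i y)) ∈ X
  glue_spec : ∀ u ∈ lang X, ∀ v ∈ lang X, u.length = m → v.length = m →
    (glue u v).length = N ∧ u ++ glue u v ++ v ∈ lang X

namespace GluingData

variable {A : Type*} {X : Set (ℤ → A)} (S : GluingData X) {x x' : ℤ → A} {i i' j s s' : ℤ}

def NearY (x : ℤ → A) (i : ℤ) : Prop :=
  ∃ y ∈ S.Y, EqOn y (shiftBy i x) (Icc (-(S.m + S.r : ℤ)) (S.m + S.r))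

/-- The margin `N + m` makes every inactive gap between two active runs longer than
`2 * (N + m)`, leaving room for two gluing words. -/
def IsActive (x : ℤ → A) (i : ℤ) : Prop :=
  ∃ a, a ≤ i ∧ i < a + S.m ∧ ∀ j, a - (S.N + S.m) ≤ j → j < a + S.m + (S.N + S.m) → S.NearY x j

open Classical in
noncomputable def ruleOrSelf (x : ℤ → A) (i : ℤ) : A :=
  if S.IsActive x i then S.φ (shiftBy i x) else x i

def IsSlot (x : ℤ → A) (s : ℤ) : Prop :=
  (S.IsActive x (s - 1) ∧ ¬S.IsActive x s) ∨
    (¬S.IsActive x (s + S.N - 1) ∧ S.IsActive x (s + S.N))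

noncomputable def bridge (x : ℤ → A) (s : ℤ) : List A :=
  S.glue (List.ofFn fun k : Fin S.m => S.ruleOrSelf x (s - S.m + k))
    (List.ofFn fun k : Fin S.m => S.ruleOrSelf x (s + S.N + k))

-- Slots are at least `N + m` apart (`IsSlot.add_le`), so the offset `h.choose` is unique.
open Classical in
noncomputable def extension (x : ℤ → A) (i : ℤ) : A :=
  if h : ∃ d : ℕ, d < S.N ∧ S.IsSlot x (i - d) then (S.bridge x (i - h.choose)).getD h.choose (x i)
  else S.ruleOrSelf x i

variable {S}

lemma IsActive.nearY (h : S.IsActive x i) : S.NearY x i :=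
  let ⟨_, h₁, h₂, ha⟩ := h
  ha i (by omega) (by omega)

lemma isActive_gap {l : ℤ} (hi : S.IsActive x i) (hj : S.IsActive x j) (hil : i ≤ l) (hlj : l ≤ j)
    (hl : ¬S.IsActive x l) : i + 2 * (S.N + S.m) + 2 ≤ j := by
  obtain ⟨a, ha₁, ha₂, ha⟩ := hi
  obtain ⟨b, hb₁, hb₂, hb⟩ := hj
  by_contra! hji
  apply hl
  rcases lt_or_ge l (a + S.m) with hla | hla
  · exact ⟨a, by omega, hla, ha⟩
  rcases le_or_gt b l with hbl | hbl
  · exact ⟨b, hbl, by omega, hb⟩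
  refine ⟨l, le_rfl, by have := S.one_le_m; omega, fun t ht₁ ht₂ => ?_⟩
  rcases lt_or_ge t (a + S.m + (S.N + S.m)) with hta | hta
  · exact ha t (by omega) hta
  · exact hb t (by omega) (by omega)

lemma isActive_of_run_end (h : S.IsActive x (s - 1)) (h' : ¬S.IsActive x s)
    (hj₁ : s - S.m ≤ j) (hj₂ : j < s) : S.IsActive x j := by
  obtain ⟨a, ha₁, ha₂, ha⟩ := h
  have : a + S.m = s := by
    by_contra
    exact h' ⟨a, by omega, by omega, ha⟩
  exact ⟨a, by omega, by omega, ha⟩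

lemma isActive_of_run_start (h' : ¬S.IsActive x (s - 1)) (h : S.IsActive x s)
    (hj₁ : s ≤ j) (hj₂ : j < s + S.m) : S.IsActive x j := by
  obtain ⟨a, ha₁, ha₂, ha⟩ := h
  have : a = s := by
    by_contra
    exact h' ⟨a, by omega, by omega, ha⟩
  exact ⟨a, by omega, by omega, ha⟩

namespace IsSlot

lemma add_le (hs : S.IsSlot x s) (hs' : S.IsSlot x s') (h : s < s') : s + S.N + S.m ≤ s' := by
  rcases hs with ⟨hl, hr⟩ | ⟨hl, hr⟩ <;> rcases hs' with ⟨hl', hr'⟩ | ⟨hl', hr'⟩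
  · have := isActive_gap hl hl' (l := s) (by omega) (by omega) hr
    omega
  · have := isActive_gap hl hr' (l := s) (by omega) (by omega) hr
    omega
  · by_contra! hlt
    rcases lt_or_ge s' (s + S.N) with h' | h'
    · have := isActive_gap hl' hr (l := s + S.N - 1) (by omega) (by omega) hl
      omega
    · exact hr' (isActive_of_run_start hl hr h' (by omega))
  · have := isActive_gap hr hr' (l := s' + S.N - 1) (by omega) (by omega) hl'
    omega

lemma left_const (hs : S.IsSlot x s) :
    (∀ k : ℕ, k < S.m → S.IsActive x (s - S.m + k)) ∨
      (∀ k : ℕ, k < S.m → ¬S.IsActive x (s - S.m + k)) := by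
  rcases hs with ⟨hl, hr⟩ | ⟨hl, hr⟩
  · exact Or.inl fun k hk => isActive_of_run_end hl hr (by omega) (by omega)
  · refine Or.inr fun k hk hk' => ?_
    have := isActive_gap hk' hr (l := s + S.N - 1) (by omega) (by omega) hl
    omega

lemma right_const (hs : S.IsSlot x s) :
    (∀ k : ℕ, k < S.m → S.IsActive x (s + S.N + k)) ∨
      (∀ k : ℕ, k < S.m → ¬S.IsActive x (s + S.N + k)) := by
  rcases hs with ⟨hl, hr⟩ | ⟨hl, hr⟩
  · refine Or.inr fun k hk hk' => ?_
    have := isActive_gap hl hk' (l := s) (by omega) (by omega) hr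
    omega
  · exact Or.inl fun k hk => isActive_of_run_start hl hr (by omega) (by omega)

lemma not_isSlot_sub (hs : S.IsSlot x s) (h₁ : s - S.m ≤ i) (h₂ : i < s + S.N + S.m)
    (h₃ : i < s ∨ s + S.N ≤ i) {d : ℕ} (hd : d < S.N) : ¬S.IsSlot x (i - d) := by
  intro hs'
  rcases lt_trichotomy (i - d) s with h | h | h
  · have := hs'.add_le hs h
    omega
  · omega
  · have := hs.add_le hs' h
    omega

end IsSlot

lemma isSlot_offset_unique {d d' : ℕ} (hs : S.IsSlot x (i - d)) (hs' : S.IsSlot x (i - d'))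
    (hd : d < S.N) (hd' : d' < S.N) : d = d' := by
  rcases lt_trichotomy d d' with h | h | h
  · have := hs'.add_le hs (by omega)
    omega
  · exact h
  · have := hs.add_le hs' (by omega)
    omega

lemma extension_of_isSlot {d : ℕ} (hs : S.IsSlot x (i - d)) (hd : d < S.N) :
    S.extension x i = (S.bridge x (i - d)).getD d (x i) := by
  have h : ∃ d : ℕ, d < S.N ∧ S.IsSlot x (i - d) := ⟨d, hd, hs⟩
  rw [extension, dif_pos h, isSlot_offset_unique h.choose_spec.2 hs h.choose_spec.1 hd]

lemma extension_of_not_isSlot (h : ∀ d : ℕ, d < S.N → ¬S.IsSlot x (i - d)) :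
    S.extension x i = S.ruleOrSelf x i := by
  rw [extension, dif_neg fun ⟨d, hd, hs⟩ => h d hd hs]

lemma ruleOrSelf_segmentIn (hx : x ∈ X)
    (hs : (∀ k : ℕ, k < S.m → S.IsActive x (s + k)) ∨ (∀ k : ℕ, k < S.m → ¬S.IsActive x (s + k))) :
    SegmentIn X (S.ruleOrSelf x) s S.m := by
  rcases hs with hs | hs
  · obtain ⟨y, hy, hyx⟩ := (by simpa using hs 0 S.one_le_m : S.IsActive x s).nearY
    refine ⟨_, S.sliding_mem y hy, 0, fun k hk => ?_⟩
    rw [ruleOrSelf, if_pos (hs k hk), zero_add]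
    refine S.φ_local _ _ fun t ht => ?_
    have := hyx (show t + k ∈ Icc (-(S.m + S.r : ℤ)) (S.m + S.r) from ⟨by linarith [ht.1], by
      linarith [ht.2]⟩)
    simp only [shiftBy] at this ⊢
    rw [this, add_right_comm, add_assoc]
  · exact ⟨x, hx, s, fun k hk => by rw [ruleOrSelf, if_neg (hs k hk)]⟩

lemma extension_segmentIn_of_isSlot (hx : x ∈ X) (hs : S.IsSlot x s) :
    SegmentIn X (S.extension x) (s - S.m) (S.m + S.N + S.m) := by
  have hu := (ruleOrSelf_segmentIn hx hs.left_const).ofFn_mem_lang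
  have hv := (ruleOrSelf_segmentIn hx hs.right_const).ofFn_mem_lang
  obtain ⟨hlen, hmem⟩ := S.glue_spec _ hu _ hv (List.length_ofFn) (List.length_ofFn)
  have hseg := segmentIn_of_mem_lang (z := S.extension x) (s := s - S.m) hmem fun k hk => ?_
  · rwa [List.length_append, List.length_append, List.length_ofFn, List.length_ofFn, hlen] at hseg
  simp only [List.length_append, List.length_ofFn, hlen] at hk
  rcases lt_or_ge k S.m with h₁ | h₁
  · rw [List.getElem_append_left (by simp [hlen]; omega), List.getElem_append_left (by simp; omega),
      List.getElem_ofFn, extension_of_not_isSlot fun d => hs.not_isSlot_sub (by omega) (by omega)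
        (by omega)]
  rcases lt_or_ge k (S.m + S.N) with h₂ | h₂
  · have e : s - S.m + k - ((k - S.m : ℕ) : ℤ) = s := by omega
    rw [List.getElem_append_left (by simp [hlen]; omega),
      List.getElem_append_right (by simp; omega),
      extension_of_isSlot (d := k - S.m) (by rwa [e]) (by omega), e,
      List.getD_eq_getElem _ _ (by rw [bridge, hlen]; omega)]
    simp only [List.length_ofFn]
    rfl
  · rw [List.getElem_append_right (by simp [hlen]; omega), List.getElem_ofFn,
      extension_of_not_isSlot fun d => hs.not_isSlot_sub (by omega) (by omega) (by omega)]
    simp only [List.length_append, List.length_ofFn, hlen]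
    congr 1
    omega

lemma extension_segmentIn (hx : x ∈ X) (j : ℤ) : SegmentIn X (S.extension x) j S.m := by
  by_cases hcov : ∃ s, S.IsSlot x s ∧ ∃ k : ℕ, k < S.m ∧ s ≤ j + k ∧ j + k < s + S.N
  · obtain ⟨s, hs, k, hk, h₁, h₂⟩ := hcov
    exact (extension_segmentIn_of_isSlot hx hs).mono (by omega) (by omega)
  push Not at hcov
  have hN := S.one_le_N
  -- no slot meets the window, so the activity cannot switch inside it
  have hconst := iff_of_forall_iff_succ (p := S.IsActive x) (j := j) (L := S.m) fun k hk => by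
    by_contra hsw
    by_cases hk' : S.IsActive x (j + k)
    · have hs : S.IsSlot x (j + k + 1) :=
        Or.inl ⟨by rwa [add_sub_cancel_right], fun h => hsw (iff_of_true h hk')⟩
      have := hcov _ hs (k + 1) hk (by push_cast; omega)
      omega
    · have hs : S.IsSlot x (j + k + 1 - S.N) :=
        Or.inr ⟨by rwa [sub_add_cancel, add_sub_cancel_right],
          by rw [sub_add_cancel]; exact by_contra fun h => hsw (iff_of_false h hk')⟩
      have := hcov _ hs k (by omega) (by omega)
      omega
  refine (ruleOrSelf_segmentIn hx ?_).congr fun k hk =>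
    (extension_of_not_isSlot fun d hd hs => ?_).symm
  · by_cases hj : S.IsActive x j
    · exact Or.inl fun k hk => (hconst k hk).2 hj
    · exact Or.inr fun k hk => (hconst k hk).not.2 hj
  · have := hcov _ hs k hk (by omega)
    omega

lemma IsActive.congr (h : EqOn (shiftBy i x) (shiftBy i' x')
    (Icc (-(S.N + 3 * S.m + S.r : ℤ)) (S.N + 3 * S.m + S.r))) (ha : S.IsActive x i) :
    S.IsActive x' i' := by
  obtain ⟨a, ha₁, ha₂, ha⟩ := ha
  refine ⟨a - i + i', by omega, by omega, fun j hj₁ hj₂ => ?_⟩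
  obtain ⟨y, hy, hyx⟩ := ha (j - i' + i) (by omega) (by omega)
  exact ⟨y, hy, hyx.trans (eqOn_shiftBy_of_eqOn h (by ring) (by omega) (by omega))⟩

lemma isActive_congr (h : EqOn (shiftBy i x) (shiftBy i' x')
    (Icc (-(S.N + 3 * S.m + S.r : ℤ)) (S.N + 3 * S.m + S.r))) :
    S.IsActive x i ↔ S.IsActive x' i' :=
  ⟨IsActive.congr h, IsActive.congr h.symm⟩

lemma ruleOrSelf_congr (h : EqOn (shiftBy i x) (shiftBy i' x')
    (Icc (-(S.N + 3 * S.m + S.r : ℤ)) (S.N + 3 * S.m + S.r))) :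
    S.ruleOrSelf x i = S.ruleOrSelf x' i' := by
  by_cases ha : S.IsActive x i
  · rw [ruleOrSelf, ruleOrSelf, if_pos ha, if_pos ((isActive_congr h).1 ha)]
    exact S.φ_local _ _ (h.mono (Icc_subset_Icc (by omega) (by omega)))
  · rw [ruleOrSelf, ruleOrSelf, if_neg ha, if_neg ((isActive_congr h).not.1 ha)]
    simpa [shiftBy] using h (show (0 : ℤ) ∈ Icc _ _ from ⟨by omega, by omega⟩)

lemma isSlot_congr (h : EqOn (shiftBy s x) (shiftBy s' x')
    (Icc (-(2 * S.N + 3 * S.m + S.r : ℤ)) (2 * S.N + 3 * S.m + S.r))) :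
    S.IsSlot x s ↔ S.IsSlot x' s' := by
  have hN := S.one_le_N
  have hc : ∀ j j', j - s = j' - s' → -1 ≤ j - s → j - s ≤ S.N →
      (S.IsActive x j ↔ S.IsActive x' j') := fun j j' hj h₁ h₂ =>
    isActive_congr (eqOn_shiftBy_of_eqOn h hj (by omega) (by omega))
  rw [IsSlot, IsSlot, hc (s - 1) (s' - 1) (by ring) (by omega) (by omega),
    hc s s' (by ring) (by omega) (by omega),
    hc (s + S.N - 1) (s' + S.N - 1) (by ring) (by omega) (by omega),
    hc (s + S.N) (s' + S.N) (by ring) (by omega) (by omega)]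

lemma bridge_congr (h : EqOn (shiftBy s x) (shiftBy s' x')
    (Icc (-(2 * S.N + 4 * S.m + S.r : ℤ)) (2 * S.N + 4 * S.m + S.r))) :
    S.bridge x s = S.bridge x' s' := by
  rw [bridge, bridge]
  congr 1 <;> refine List.ofFn_inj.2 (funext fun k => ruleOrSelf_congr
    (eqOn_shiftBy_of_eqOn h (by ring) (by have := k.isLt; omega) (by have := k.isLt; omega)))

lemma extension_congr (h : EqOn (shiftBy i x) (shiftBy i' x')
    (Icc (-(3 * S.N + 4 * S.m + S.r : ℤ)) (3 * S.N + 4 * S.m + S.r))) :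
    S.extension x i = S.extension x' i' := by
  have hslot : ∀ d : ℕ, d < S.N → (S.IsSlot x (i - d) ↔ S.IsSlot x' (i' - d)) := fun d hd =>
    isSlot_congr (eqOn_shiftBy_of_eqOn h (by ring) (by omega) (by omega))
  by_cases hs : ∃ d : ℕ, d < S.N ∧ S.IsSlot x (i - d)
  · obtain ⟨d, hd, hsd⟩ := hs
    have hxi : x i = x' i' := by
      simpa [shiftBy] using h (show (0 : ℤ) ∈ Icc _ _ from ⟨by omega, by omega⟩)
    rw [extension_of_isSlot hsd hd, extension_of_isSlot ((hslot d hd).1 hsd) hd, hxi,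
      bridge_congr (s := i - d) (s' := i' - d) (eqOn_shiftBy_of_eqOn h (by ring) (by omega)
        (by omega))]
  · push Not at hs
    rw [extension_of_not_isSlot hs,
      extension_of_not_isSlot fun d hd => (hslot d hd).not.1 (hs d hd),
      ruleOrSelf_congr (h.mono (Icc_subset_Icc (by omega) (by omega)))]

lemma continuous_extension [TopologicalSpace A] [DiscreteTopology A] :
    Continuous S.extension :=
  continuous_pi fun i => continuous_of_eqOn (finite_Icc (i - (3 * S.N + 4 * S.m + S.r))
    (i + (3 * S.N + 4 * S.m + S.r))) fun _ _ hxx' => extension_congr fun _ ht =>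
      hxx' ⟨by linarith [ht.1], by linarith [ht.2]⟩

lemma extension_shiftMap (x : ℤ → A) : S.extension (shiftMap x) = shiftMap (S.extension x) :=
  funext fun i => extension_congr fun t _ => by simp [shiftBy, shiftMap, add_assoc]

lemma isCAOn_extension [TopologicalSpace A] [DiscreteTopology A] : IsCAOn X S.extension :=
  ⟨fun _ hx => S.mem_of_segmentIn _ (extension_segmentIn hx), continuous_extension.continuousOn,
    fun x _ => extension_shiftMap x⟩

lemma extension_eq_of_mem (hY : ∀ y ∈ S.Y, ∀ n, shiftBy n y ∈ S.Y) {y : ℤ → A} (hy : y ∈ S.Y) :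
    S.extension y = fun i => S.φ (shiftBy i y) := by
  have hact : ∀ i, S.IsActive y i := fun i =>
    ⟨i, le_rfl, by have := S.one_le_m; omega, fun j _ _ => ⟨shiftBy j y, hY y hy j, eqOn_refl _ _⟩⟩
  funext i
  rw [extension_of_not_isSlot fun d _ hs => by rcases hs with ⟨-, h⟩ | ⟨h, -⟩ <;> exact h (hact _),
    ruleOrSelf, if_pos (hact i)]

end GluingData

theorem stmt2_general {A : Type*} [Finite A] [TopologicalSpace A] [DiscreteTopology A]
    (X Y : Set (ℤ → A)) (hXsft : IsSFT X) (hXmix : IsMixing X)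
    (hY : IsSubshift Y)
    (g : (ℤ → A) → (ℤ → A)) (hg1 : Set.MapsTo g Y X) (hg2 : ContinuousOn g Y)
    (hg3 : ∀ x ∈ Y, g (shiftMap x) = shiftMap (g x)) :
    ∃ h : (ℤ → A) → (ℤ → A), IsCAOn X h ∧ ∀ x ∈ Y, h x = g x := by
  obtain ⟨r, φ, hφ, hgφ⟩ := hY.exists_localRule hg2 hg3
  obtain ⟨m, hm, hXm⟩ := hXsft.exists_segmentIn_length
  obtain ⟨N, hN, glue, hglue⟩ := hXmix.exists_glue m
  have hφY : ∀ y ∈ Y, (fun i => φ (shiftBy i y)) = g y := fun y hy =>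
    funext fun i => (hgφ y hy i).symm
  let S : GluingData X :=
    ⟨Y, φ, r, m, N, glue, hm, hN, hXm, hφ, fun y hy => (hφY y hy).symm ▸ hg1 hy, hglue⟩
  exact ⟨S.extension, S.isCAOn_extension, fun y hy =>
    (S.extension_eq_of_mem (fun _ hy' => hY.shiftBy_mem hy') hy).trans (hφY y hy)⟩

/-- Let `X` be a mixing SFT, `Y ⊆ X` a subshift, and `g : Y → X` continuous and
shift-commuting. Then `g` extends to a cellular automaton `h : X → X`. -/
theorem stmt2 {A : Type*} [Finite A] [TopologicalSpace A] [DiscreteTopology A]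
    (X Y : Set (ℤ → A)) (hX : IsSubshift X) (hXsft : IsSFT X) (hXmix : IsMixing X)
    (hY : IsSubshift Y) (hYX : Y ⊆ X)
    (g : (ℤ → A) → (ℤ → A)) (hg1 : Set.MapsTo g Y X) (hg2 : ContinuousOn g Y)
    (hg3 : ∀ x ∈ Y, g (shiftMap x) = shiftMap (g x)) :
    ∃ h : (ℤ → A) → (ℤ → A), IsCAOn X h ∧ ∀ x ∈ Y, h x = g x :=
  stmt2_general X Y hXsft hXmix hY g hg1 hg2 hg3
end

section
/- Let X be a subshift in which the periodic points are dense, and let f : X → X be an injective cellular automaton. Then f is surjective. -/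
/- A point of `X` of period `p` is sent by the injective map `f` to a point of `X` of period `p`;
there are only finitely many of those, so `f` permutes them and every periodic point lies in
`f '' X`. Since `X` is compact, `f '' X` is closed, and it contains the dense set of periodic
points, hence all of `X`. -/

open Function Set

section Shift

variable {A : Type*}

lemma shiftMap_iterate_apply (x : ℤ → A) (p : ℕ) (i : ℤ) :
    shiftMap^[p] x i = x (i + p) := by
  induction p generalizing i with
  | zero => simp
  | succ n ih =>
    rw [iterate_succ_apply', shiftMap, ih, Nat.cast_succ, add_assoc, add_comm 1]

lemma isPeriodicPt_shiftMap_iff {x : ℤ → A} {p : ℕ} :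
    IsPeriodicPt shiftMap p x ↔ Periodic x (p : ℤ) := by
  refine ⟨fun h i => ?_, fun h => funext fun i => ?_⟩
  · conv_rhs => rw [← h.eq]
    rw [shiftMap_iterate_apply]
  · rw [shiftMap_iterate_apply, h]

lemma Function.Periodic.apply_emod {x : ℤ → A} {p : ℤ} (h : Periodic x p) (i : ℤ) :
    x (i % p) = x i := by
  rw [Int.emod_def, mul_comm, ← smul_eq_mul, h.sub_zsmul_eq]

lemma finite_setOf_isPeriodicPt_shiftMap [Finite A] {p : ℕ} (hp : 0 < p) :
    {x : ℤ → A | IsPeriodicPt shiftMap p x}.Finite := by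
  refine Finite.of_finite_image (f := fun x (k : Fin p) => x k) (toFinite _)
    fun x hx y hy hxy => ?_
  replace hx := isPeriodicPt_shiftMap_iff.mp hx
  replace hy := isPeriodicPt_shiftMap_iff.mp hy
  funext i
  have hp' : (0 : ℤ) < p := by exact_mod_cast hp
  let k : Fin p := ⟨(i % p).toNat, by have := Int.emod_lt_of_pos i hp'; omega⟩
  have hk : ((k : ℕ) : ℤ) = i % p := Int.toNat_of_nonneg (Int.emod_nonneg i hp'.ne')
  rw [← hx.apply_emod, ← hy.apply_emod, ← hk]
  exact congrFun hxy k

end Shift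

section Subshift

variable {A : Type*} [TopologicalSpace A] {X : Set (ℤ → A)} {f : (ℤ → A) → (ℤ → A)}

lemma IsSubshift.mapsTo_shiftMap (hX : IsSubshift X) : MapsTo shiftMap X X :=
  image_subset_iff.mp hX.2.subset

lemma IsCAOn.apply_shiftMap_iterate (hf : IsCAOn X f) (hX : IsSubshift X) {x : ℤ → A}
    (hx : x ∈ X) (p : ℕ) : f (shiftMap^[p] x) = shiftMap^[p] (f x) := by
  induction p with
  | zero => rfl
  | succ n ih =>
    rw [iterate_succ_apply', iterate_succ_apply',
      hf.2.2 _ (hX.mapsTo_shiftMap.iterate n hx), ih]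

lemma IsCAOn.mapsTo_periodicPts (hf : IsCAOn X f) (hX : IsSubshift X) (p : ℕ) :
    MapsTo f {x ∈ X | IsPeriodicPt shiftMap p x} {x ∈ X | IsPeriodicPt shiftMap p x} :=
  fun x ⟨hx, hxp⟩ => ⟨hf.1 hx, by
    rw [IsPeriodicPt, IsFixedPt, ← hf.apply_shiftMap_iterate hX hx, hxp.eq]⟩

lemma IsCAOn.periodicPts_subset_image [Finite A] (hf : IsCAOn X f) (hX : IsSubshift X)
    (hinj : InjOn f X) {p : ℕ} (hp : 0 < p) :
    {x ∈ X | IsPeriodicPt shiftMap p x} ⊆ f '' X := by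
  have hfin : {x ∈ X | IsPeriodicPt shiftMap p x}.Finite :=
    (finite_setOf_isPeriodicPt_shiftMap hp).subset fun _ hx => hx.2
  have hbij := (hfin.injOn_iff_bijOn_of_mapsTo (hf.mapsTo_periodicPts hX p)).mp
    (hinj.mono fun _ hx => hx.1)
  exact hbij.image_eq.symm.subset.trans (image_mono fun _ hx => hx.1)

lemma IsCAOn.isClosed_image [CompactSpace A] [T2Space A] (hf : IsCAOn X f)
    (hX : IsClosed X) : IsClosed (f '' X) :=
  (hX.isCompact.image_of_continuousOn hf.2.1).isClosed

end Subshift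

/-- Let `X` be a subshift with dense periodic points and `f : X → X` an
injective cellular automaton. Then `f` is surjective, i.e. `f(X) = X`. -/
theorem stmt8 {A : Type*} [Finite A] [TopologicalSpace A] [DiscreteTopology A]
    (X : Set (ℤ → A)) (hX : IsSubshift X)
    (hdense : X ⊆ closure {x | x ∈ X ∧ ∃ p : ℕ, 1 ≤ p ∧ shiftMap^[p] x = x})
    (f : (ℤ → A) → (ℤ → A)) (hf : IsCAOn X f)
    (hinj : Set.InjOn f X) :
    f '' X = X := by
  refine (image_subset_iff.mpr hf.1).antisymm (hdense.trans ?_)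
  refine (hf.isClosed_image hX.1).closure_subset_iff.mpr ?_
  rintro y ⟨hy, p, hp, hyp⟩
  exact hf.periodicPts_subset_image hX hinj hp ⟨hy, hyp⟩
end

section
/- The elementary cellular automaton with Wolfram number 28, i.e. the CA f on {0,1}^ℤ with f(x)_i = 1 if and only if (x_{i-1}, x_i, x_{i+1}) ∈ {(0,1,0), (0,1,1), (1,0,0)}, is not von Neumann regular in End({0,1}^ℤ). -/
open Filter Topology

section CellularAutomaton

variable {A : Type*} [TopologicalSpace A] {h : (ℤ → A) → (ℤ → A)}

theorem IsCA.map_translate (hh : IsCA h) (k : ℤ) (z : ℤ → A) :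
    h (fun j => z (j + k)) = fun j => h z (j + k) := by
  induction k using Int.induction_on generalizing z with
  | zero => simp
  | succ n ih =>
    have hz : (fun j => z (j + (n + 1))) = shiftMap fun j => z (j + n) := by
      funext j; simp only [shiftMap]; ring_nf
    rw [hz, hh.2, ih]
    funext j; simp only [shiftMap]; ring_nf
  | pred n ih =>
    have hz : shiftMap (fun j => z (j + (-n - 1))) = fun j => z (j + -n) := by
      funext j; simp only [shiftMap]; ring_nf
    have hshift := hh.2 (fun j => z (j + (-n - 1)))
    rw [hz, ih] at hshift
    funext j
    have hj := congrFun hshift (j - 1)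
    simp only [shiftMap, sub_add_cancel] at hj
    rw [← hj]
    ring_nf

theorem IsCA.eventually_cofinite_eq [DiscreteTopology A] (hh : IsCA h) {z : ℤ → A} {a : A}
    (hz : ∀ᶠ i in cofinite, z i = a) : ∀ᶠ i in cofinite, h z i = h (fun _ => a) 0 := by
  obtain ⟨I, hI, t, hta, hIt⟩ : ∃ I : Set ℤ, I.Finite ∧ ∃ t : ℤ → Set A, (∀ i, t i ∈ 𝓝 a) ∧
      I.pi t ⊆ {y | h y 0 = h (fun _ => a) 0} := by
    rw [← Filter.mem_pi, ← nhds_pi]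
    exact ((continuous_apply 0).comp hh.1).continuousAt.preimage_mem_nhds
      ((isOpen_discrete ({h (fun _ => a) 0} : Set A)).mem_nhds rfl)
  refine (Filter.eventually_cofinite.1 hz |>.sub hI).subset fun i hi => ?_
  by_contra hsub
  apply hi
  show h z i = _
  rw [show h z i = h (fun j => z (j + i)) 0 by simp [hh.map_translate]]
  refine hIt fun j hj => ?_
  have hzj : z (j + i) = a := by
    by_contra hne
    exact hsub ⟨j + i, hne, j, hj, by ring⟩
  simpa [hzj] using mem_of_mem_nhds (hta j)

end CellularAutomaton

theorem Int.exists_greatest_of_eventually_not {P : ℤ → Prop} {m : ℤ}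
    (hP : ∀ᶠ n in atTop, ¬ P n) (hm : P m) : ∃ r, m ≤ r ∧ P r ∧ ∀ n, r < n → ¬ P n := by
  obtain ⟨N, hN⟩ := hP.exists_forall_of_atTop
  obtain ⟨r, hr, hmax⟩ := Int.exists_greatest_of_bdd
    ⟨N, fun n hn => by by_contra hlt; exact hN n (by omega) hn⟩ ⟨m, hm⟩
  exact ⟨r, hmax m hm, hr, fun n hrn hn => by have := hmax n hn; omega⟩

theorem Int.exists_least_of_eventually_not {P : ℤ → Prop} {m : ℤ}
    (hP : ∀ᶠ n in atBot, ¬ P n) (hm : P m) : ∃ l, l ≤ m ∧ P l ∧ ∀ n, n < l → ¬ P n := by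
  obtain ⟨N, hN⟩ := Filter.eventually_atBot.1 hP
  obtain ⟨l, hl, hmin⟩ := Int.exists_least_of_bdd
    ⟨N, fun n hn => by by_contra hlt; exact hN n (by omega) hn⟩ ⟨m, hm⟩
  exact ⟨l, hmin m hm, hl, fun n hnl hn => by have := hmin n hn; omega⟩

def elementaryCA (φ : Bool → Bool → Bool → Bool) (x : ℤ → Bool) (i : ℤ) : Bool :=
  φ (x (i - 1)) (x i) (x (i + 1))

def rule28 (a b c : Bool) : Bool := (!a && b) || (a && !b && !c)

theorem rule28_eq_true_iff (a b c : Bool) : rule28 a b c = true ↔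
    (a, b, c) = (false, true, false) ∨ (a, b, c) = (false, true, true) ∨
      (a, b, c) = (true, false, false) := by
  revert a b c; decide

theorem eq_false_of_rule28_eq_true_of_rule28_eq_true {a b c d : Bool}
    (h₁ : rule28 a b c = true) (h₂ : rule28 b c d = true) : d = false := by
  revert a b c d; decide

theorem elementaryCA_rule28_of_rising {x : ℤ → Bool} {i : ℤ} (h₁ : x (i - 1) = false)
    (h₂ : x i = true) : elementaryCA rule28 x i = true := by
  simp [elementaryCA, rule28, h₁, h₂]

theorem elementaryCA_rule28_of_falling {x : ℤ → Bool} {i : ℤ} (h₁ : x (i - 1) = true)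
    (h₂ : x i = false) (h₃ : x (i + 1) = false) : elementaryCA rule28 x i = true := by
  simp [elementaryCA, rule28, h₁, h₂, h₃]

theorem elementaryCA_rule28_indicator_neg :
    elementaryCA rule28 (fun i => decide (i < 0)) = fun i => decide (i = 0) := by
  funext i
  rw [Bool.eq_iff_iff]
  simp only [elementaryCA, rule28, sub_neg, Bool.or_eq_true, Bool.and_eq_true,
    Bool.not_eq_eq_eq_not, Bool.not_true, decide_eq_false_iff_not, not_lt, decide_eq_true_eq]
  omega

theorem elementaryCA_rule28_single :
    elementaryCA rule28 (fun i => decide (i = 0)) = fun i => decide (i = 0 ∨ i = 1) := by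
  funext i
  rw [Bool.eq_iff_iff]
  simp only [elementaryCA, rule28, Bool.or_eq_true, Bool.and_eq_true, Bool.not_eq_eq_eq_not,
    Bool.not_true, decide_eq_false_iff_not, decide_eq_true_eq, Bool.decide_or]
  omega

theorem elementaryCA_rule28_ne_single {v : ℤ → Bool} (hbot : ∀ᶠ n in atBot, v n = false)
    (htop : ∀ᶠ n in atTop, v n = false) :
    elementaryCA rule28 v ≠ fun i => decide (i = 0) := by
  intro H
  have hzero : ∀ i, elementaryCA rule28 v i = true → i = 0 := fun i hi => by simpa [H] using hi
  obtain ⟨m, hm⟩ : ∃ m, v m = true := by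
    by_contra! hv
    simpa [elementaryCA, rule28, hv] using congrFun H 0
  obtain ⟨r, hmr, hr, hr'⟩ :=
    Int.exists_greatest_of_eventually_not (P := fun n => v n = true) (by simpa using htop) hm
  obtain ⟨l, hlm, hl, hl'⟩ :=
    Int.exists_least_of_eventually_not (P := fun n => v n = true) (by simpa using hbot) hm
  have hr0 := hzero (r + 1) (elementaryCA_rule28_of_falling (by simpa using hr)
    (by simpa using hr' (r + 1) (by omega)) (by simpa using hr' (r + 1 + 1) (by omega)))
  have hl0 := hzero l (elementaryCA_rule28_of_rising (by simpa using hl' (l - 1) (by omega)) hl)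
  omega

theorem elementaryCA_rule28_ne_pair {w : ℤ → Bool} (htop : ∀ᶠ n in atTop, w n = true) :
    elementaryCA rule28 w ≠ fun i => decide (i = 0 ∨ i = 1) := by
  intro H
  have h2 : w 2 = false := eq_false_of_rule28_eq_true_of_rule28_eq_true
    (by simpa [elementaryCA] using congrFun H 0) (by simpa [elementaryCA] using congrFun H 1)
  obtain ⟨r, h2r, hr, hr'⟩ :=
    Int.exists_greatest_of_eventually_not (P := fun n => w n = false) (by simpa using htop) h2
  have hr1 := congrFun H (r + 1)
  rw [elementaryCA_rule28_of_rising (by simpa using hr) (by simpa using hr' (r + 1) (by omega))]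
    at hr1
  exact absurd (of_decide_eq_true hr1.symm) (by omega)

/-- The elementary cellular automaton with Wolfram number 28 is not von
Neumann regular in End({0,1}^ℤ). Here 1 is represented by `true`. -/
theorem stmt12 (f : (ℤ → Bool) → (ℤ → Bool))
    (hf : ∀ (x : ℤ → Bool) (i : ℤ), f x i = true ↔
      (x (i - 1), x i, x (i + 1)) = (false, true, false) ∨
      (x (i - 1), x i, x (i + 1)) = (false, true, true) ∨
      (x (i - 1), x i, x (i + 1)) = (true, false, false)) :
    ¬ IsRegularCA f := by
  rintro ⟨h, hh, hfhf, -⟩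
  obtain rfl : f = elementaryCA rule28 :=
    funext₂ fun x i => Bool.eq_iff_iff.2 ((hf x i).trans (rule28_eq_true_iff ..).symm)
  have hfh : ∀ u, elementaryCA rule28 (h (elementaryCA rule28 u)) = elementaryCA rule28 u :=
    fun u => congrFun hfhf u
  have htails : ∀ z : ℤ → Bool, (∀ᶠ i in cofinite, z i = false) →
      (∀ᶠ i in atBot, h z i = h (fun _ => false) 0) ∧ ∀ᶠ i in atTop, h z i = h (fun _ => false) 0 :=
    fun z hz => by simpa [Int.cofinite_eq] using hh.eventually_cofinite_eq hz
  cases hb : h (fun _ => false) 0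
  · obtain ⟨hbot, htop⟩ := htails (fun i => decide (i = 0))
      ((eventually_cofinite_ne 0).mono fun i hi => by simp [hi])
    refine elementaryCA_rule28_ne_single (hb ▸ hbot) (hb ▸ htop) ?_
    simpa [elementaryCA_rule28_indicator_neg] using hfh fun i => decide (i < 0)
  · obtain ⟨-, htop⟩ := htails (fun i => decide (i = 0 ∨ i = 1))
      (((eventually_cofinite_ne 0).and (eventually_cofinite_ne 1)).mono fun i hi => by
        simp [hi.1, hi.2])
    refine elementaryCA_rule28_ne_pair (hb ▸ htop) ?_
    simpa [elementaryCA_rule28_single] using hfh fun i => decide (i = 0)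
end

section
/- The elementary cellular automaton with Wolfram number 58, i.e. the CA f on {0,1}^ℤ with f(x)_i = 1 if and only if (x_{i-1}, x_i, x_{i+1}) ∈ {(0,0,1), (0,1,1), (1,0,0), (1,0,1)}, is not von Neumann regular in End({0,1}^ℤ). -/
def ruleB (a b c : Bool) : Bool := if a then !b else c
def Y1 : ℤ → Bool := fun i => decide (i = 0)
def Y2 : ℤ → Bool := fun i => decide (i = 0 ∨ i = 1)
def X1 : ℤ → Bool := fun i => decide (i < 0)
def X2 : ℤ → Bool := fun i => decide (1 ≤ i)

lemma shift_iter {A : Type*} (y : ℤ → A) : ∀ (n : ℕ) (i : ℤ),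
    shiftMap^[n] y i = y (i + n) := by
  intro n
  induction n with
  | zero => intro i; simp
  | succ n ih =>
      intro i
      rw [Function.iterate_succ_apply']
      show shiftMap^[n] y (i+1) = y (i + (n+1))
      rw [ih]; congr 1; ring

/-- The elementary cellular automaton with Wolfram number 58 is not von
Neumann regular in End({0,1}^ℤ). Here 1 is represented by `true`. -/
theorem stmt14 (f : (ℤ → Bool) → (ℤ → Bool))
    (hf : ∀ (x : ℤ → Bool) (i : ℤ), f x i = true ↔
      (x (i - 1), x i, x (i + 1)) = (false, false, true) ∨
      (x (i - 1), x i, x (i + 1)) = (false, true, true) ∨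
      (x (i - 1), x i, x (i + 1)) = (true, false, false) ∨
      (x (i - 1), x i, x (i + 1)) = (true, false, true)) :
    ¬ IsRegularCA f := by
  have hf' : ∀ (x : ℤ → Bool) (i : ℤ), f x i = ruleB (x (i-1)) (x i) (x (i+1)) := by
    intro x i
    have H := hf x i
    cases hA : x (i-1) <;> cases hB : x i <;> cases hC : x (i+1) <;>
      simp [hA, hB, hC, ruleB] at H ⊢ <;> simp [H]
  -- f X1 = Y1
  have hx1 : f X1 = Y1 := by
    funext i
    rw [hf' X1 i]
    simp only [X1, Y1]
    by_cases h1 : i < 0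
    · simp [ruleB, h1, show i - 1 < 0 by omega, show i ≠ 0 by omega]
    · by_cases h0 : i = 0
      · subst h0; decide
      · simp [ruleB, h1, show ¬(i - 1 < 0) by omega, show ¬(i + 1 < 0) by omega, h0]
  -- f X2 = Y2
  have hx2 : f X2 = Y2 := by
    funext i
    rw [hf' X2 i]
    simp only [X2, Y2]
    by_cases h1 : i < 0
    · simp [ruleB, show ¬(1 ≤ i - 1) by omega, show ¬(1 ≤ i) by omega,
        show ¬(1 ≤ i + 1) by omega, show ¬(i = 0 ∨ i = 1) by omega]
    · by_cases h0 : i = 0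
      · subst h0; decide
      · by_cases h2 : i = 1
        · subst h2; decide
        · simp [ruleB, show (1 ≤ i - 1) by omega, show (1 ≤ i) by omega,
            show (1 ≤ i + 1) by omega, show ¬(i = 0 ∨ i = 1) by omega]
  -- forcing lemma for Y1 : any preimage is false on the right
  have L1 : ∀ x : ℤ → Bool, f x = Y1 → ∀ n : ℕ, x n = false := by
    intro x hx
    have H : ∀ i : ℤ, ruleB (x (i-1)) (x i) (x (i+1)) = Y1 i := by
      intro i; rw [← hf' x i, hx]
    have h_1 := H (-1); have h0 := H 0; have h1 := H 1; have h2 := H 2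
    norm_num [Y1] at h_1 h0 h1 h2
    have base : x 0 = false ∧ x 1 = false ∧ x 2 = false :=
      (by decide : ∀ a b c d e g : Bool, ruleB a b c = false → ruleB b c d = true →
        ruleB c d e = false → ruleB d e g = false → c = false ∧ d = false ∧ e = false)
        _ _ _ _ _ _ h_1 h0 h1 h2
    have P : ∀ n : ℕ, x n = false ∧ x ((n:ℤ)+1) = false := by
      intro n
      induction n with
      | zero => exact ⟨base.1, base.2.1⟩
      | succ n ih =>
          refine ⟨by exact_mod_cast ih.2, ?_⟩
          have h := H ((n:ℤ)+1)
          have e1 : (n:ℤ)+1-1 = (n:ℤ) := by ring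
          have e2 : Y1 ((n:ℤ)+1) = false := by
            simp only [Y1, decide_eq_false_iff_not]; omega
          rw [e1, e2, ih.1] at h
          simp only [ruleB, if_false, Bool.false_eq_true] at h
          push_cast
          exact h
    exact fun n => (P n).1
  -- forcing lemma for Y2 : any preimage is true on the right
  have L2 : ∀ x : ℤ → Bool, f x = Y2 → ∀ n : ℕ, x ((n:ℤ)+1) = true := by
    intro x hx
    have H : ∀ i : ℤ, ruleB (x (i-1)) (x i) (x (i+1)) = Y2 i := by
      intro i; rw [← hf' x i, hx]
    have h0 := H 0; have h1 := H 1; have h2 := H 2; have h3 := H 3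
    norm_num [Y2] at h0 h1 h2 h3
    have base : x 1 = true ∧ x 2 = true :=
      (by decide : ∀ a b c d e g : Bool, ruleB a b c = true → ruleB b c d = true →
        ruleB c d e = false → ruleB d e g = false → c = true ∧ d = true)
        _ _ _ _ _ _ h0 h1 h2 h3
    have P : ∀ n : ℕ, x ((n:ℤ)+1) = true := by
      intro n
      induction n with
      | zero => exact base.1
      | succ n ih =>
          have h := H ((n:ℤ)+2)
          have e1 : (n:ℤ)+2-1 = (n:ℤ)+1 := by ring
          have e2 : Y2 ((n:ℤ)+2) = false := by
            simp only [Y2, decide_eq_false_iff_not]; omega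
          rw [e1, e2, ih] at h
          simp only [ruleB, if_true, Bool.not_eq_false'] at h
          push_cast
          exact h
    exact P
  -- main argument
  rintro ⟨h, ⟨hcont, hcomm⟩, hfhf, -⟩
  have hcommn : ∀ (n : ℕ) (y : ℤ → Bool), h (shiftMap^[n] y) = shiftMap^[n] (h y) := by
    intro n
    induction n with
    | zero => intro y; simp
    | succ n ih =>
        intro y
        rw [Function.iterate_succ_apply, Function.iterate_succ_apply, ih, hcomm]
  have hz1 : f (h Y1) = Y1 := by
    have := congrFun hfhf X1
    simp only [Function.comp_apply] at this
    rwa [hx1] at this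
  have hz2 : f (h Y2) = Y2 := by
    have := congrFun hfhf X2
    simp only [Function.comp_apply] at this
    rwa [hx2] at this
  have hv1 : ∀ n : ℕ, h Y1 n = false := L1 _ hz1
  have hv2 : ∀ n : ℕ, h Y2 ((n:ℤ)+1) = true := L2 _ hz2
  set zeroC : ℤ → Bool := fun _ => false with hzc
  have T : ∀ Y : ℤ → Bool, (∀ i : ℤ, 2 ≤ i → Y i = false) →
      Filter.Tendsto (fun n : ℕ => shiftMap^[n] Y) Filter.atTop (nhds zeroC) := by
    intro Y hY
    rw [tendsto_pi_nhds]
    intro i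
    have hev : ∀ᶠ n : ℕ in Filter.atTop, shiftMap^[n] Y i = false := by
      filter_upwards [Filter.eventually_ge_atTop (2 - i).toNat] with n hn
      rw [shift_iter]
      exact hY _ (by omega)
    exact Filter.Tendsto.congr' (hev.mono fun n hn => hn.symm) tendsto_const_nhds
  have cont0 : Continuous fun z : ℤ → Bool => h z 0 := (continuous_apply 0).comp hcont
  have A1 : Filter.Tendsto (fun n : ℕ => h (shiftMap^[n] Y1) 0) Filter.atTop
      (nhds (h zeroC 0)) :=
    (cont0.tendsto zeroC).comp (T Y1 (by intro i hi; simp [Y1]; omega))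
  have A2 : Filter.Tendsto (fun n : ℕ => h (shiftMap^[n] Y2) 0) Filter.atTop
      (nhds (h zeroC 0)) :=
    (cont0.tendsto zeroC).comp (T Y2 (by intro i hi; simp [Y2]; omega))
  have B1 : h zeroC 0 = false := by
    refine tendsto_nhds_unique A1 ?_
    refine Filter.Tendsto.congr' ?_ tendsto_const_nhds
    filter_upwards with n
    rw [hcommn, shift_iter, zero_add]
    exact (hv1 n).symm
  have B2 : h zeroC 0 = true := by
    refine tendsto_nhds_unique A2 ?_
    refine Filter.Tendsto.congr' ?_ tendsto_const_nhds
    filter_upwards [Filter.eventually_ge_atTop 1] with n hn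
    rw [hcommn, shift_iter, zero_add]
    have e : (n:ℤ) = ((n-1:ℕ):ℤ) + 1 := by omega
    rw [e]
    exact (hv2 (n-1)).symm
  rw [B1] at B2
  exact Bool.false_ne_true B2
end

section
/- The elementary cellular automaton f with Wolfram number 41 (f(x)_i = 1 iff (x_{i-1}, x_i, x_{i+1}) ∈ {(0,0,0), (0,1,1), (1,0,1)}) does not satisfy the weak periodic point condition: the point (010)^ℤ (the 3-periodic point with repeating block 010) lies in the image of f, since f((000101)^ℤ) = (010)^ℤ, but it has no f-preimage x with σ³(x) = x. -/
/-- ECA 41 does not satisfy the weak periodic point condition: the 3-periodic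
point `(010)^ℤ` (given by `y i = 1 ↔ i ≡ 1 (mod 3)`) is in the image of `f`,
since `f((000101)^ℤ) = (010)^ℤ` where `(000101)^ℤ` is given by
`x i = 1 ↔ i ≡ 3 or 5 (mod 6)`, but it has no `f`-preimage `x` with
`σ³(x) = x`. -/
theorem stmt15 (f : (ℤ → Bool) → (ℤ → Bool))
    (hf : ∀ (x : ℤ → Bool) (i : ℤ), f x i = true ↔
      (x (i - 1), x i, x (i + 1)) = (false, false, false) ∨
      (x (i - 1), x i, x (i + 1)) = (false, true, true) ∨
      (x (i - 1), x i, x (i + 1)) = (true, false, true)) :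
    f (fun i => decide (i % 6 = 3 ∨ i % 6 = 5)) = (fun i => decide (i % 3 = 1)) ∧
    ¬ ∃ x : ℤ → Bool,
        f x = (fun i => decide (i % 3 = 1)) ∧ shiftMap^[3] x = x := by
  constructor
  · funext i
    have h := hf (fun i => decide (i % 6 = 3 ∨ i % 6 = 5)) i
    have h6 : i % 6 = 0 ∨ i % 6 = 1 ∨ i % 6 = 2 ∨ i % 6 = 3 ∨ i % 6 = 4 ∨ i % 6 = 5 := by
      omega
    cases hv : f (fun i => decide (i % 6 = 3 ∨ i % 6 = 5)) i <;>
      rw [hv] at h <;> norm_num at h ⊢ <;> omega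
  · rintro ⟨x, hfx, hxp⟩
    have hper : ∀ i, x (i + 3) = x i := by
      intro i
      have := congrFun hxp i
      simpa [shiftMap, Function.iterate_succ, Function.comp, add_assoc] using this
    have h0 : f x 0 = false := by
      have := congrFun hfx 0; norm_num at this; exact this
    have h1 : f x 1 = true := by
      have := congrFun hfx 1; norm_num at this; exact this
    have h2 : f x 2 = false := by
      have := congrFun hfx 2; norm_num at this; exact this
    have hm1 : x (-1) = x 2 := by have := hper (-1); norm_num at this; exact this.symm
    have h3 : x 3 = x 0 := by have := hper 0; norm_num at this; exact this
    have H0 := hf x 0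
    have H1 := hf x 1
    have H2 := hf x 2
    norm_num [hm1, h3, h0, h1, h2] at H0 H1 H2
    cases hx0 : x 0 <;> cases hx1 : x 1 <;> cases hx2 : x 2 <;>
      simp [hx0, hx1, hx2] at H0 H1 H2
end

section
/- The elementary cellular automaton f with Wolfram number 28 (f(x)_i = 1 iff (x_{i-1}, x_i, x_{i+1}) ∈ {(0,1,0), (0,1,1), (1,0,0)}) satisfies the weak periodic point condition: for every p ≥ 1, every point y in the image of f with σ^p(y) = y has an f-preimage x ∈ {0,1}^ℤ with σ^p(x) = x. -/
/-- Predicate: position `i - n` carries a `1` of `y`, with `n < p`. -/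
def P28 (y : ℤ → Bool) (p : ℕ) (i : ℤ) (n : ℕ) : Prop := n < p ∧ y (i - (n : ℤ)) = true

open Classical in
/-- `L28 y p i = true` iff there is a `1` of `y` in the window `(i-p, i]` and the
most recent such `1`, at position `q`, satisfies `y (q-1) = false`. -/
noncomputable def L28 (y : ℤ → Bool) (p : ℕ) (i : ℤ) : Bool :=
  if h : ∃ n, P28 y p i n then !y (i - (Nat.find h : ℤ) - 1) else false

/-- The candidate preimage. -/
noncomputable def X28 (y : ℤ → Bool) (p : ℕ) (i : ℤ) : Bool :=
  L28 y p i && !(y (i + 1) && !y i)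

lemma L28_of_one (y : ℤ → Bool) (p : ℕ) (hp : 1 ≤ p) (i : ℤ) (hy : y i = true) :
    L28 y p i = !y (i - 1) := by
  classical
  have hE : ∃ n, P28 y p i n := ⟨0, ⟨by omega, by simpa [P28] using hy⟩⟩
  rw [L28, dif_pos hE]
  have h0 : Nat.find hE = 0 := by
    rw [Nat.find_eq_zero]
    exact ⟨by omega, by simpa using hy⟩
  rw [h0]
  norm_num

lemma L28_of_zero (y : ℤ → Bool) (p : ℕ) (hper : ∀ i, y (i + p) = y i)
    (i : ℤ) (hy : y i = false) : L28 y p i = L28 y p (i - 1) := by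
  classical
  by_cases hE : ∃ n, P28 y p i n
  · have hspec := Nat.find_spec hE
    set n := Nat.find hE with hn
    have hn0 : n ≠ 0 := by
      intro h0
      rw [h0] at hspec
      obtain ⟨-, h⟩ := hspec
      simp only [Nat.cast_zero, sub_zero] at h
      rw [hy] at h; exact Bool.false_ne_true h
    obtain ⟨hnp, hny⟩ := hspec
    have hE' : ∃ m, P28 y p (i - 1) m :=
      ⟨n - 1, ⟨by omega, by
        have h1 : (i - 1) - ((n - 1 : ℕ) : ℤ) = i - (n : ℤ) := by
          have : ((n - 1 : ℕ) : ℤ) = (n : ℤ) - 1 := by omega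
          rw [this]; ring
        rw [h1]; exact hny⟩⟩
    rw [L28, L28, dif_pos hE, dif_pos hE']
    have hfind : Nat.find hE' = n - 1 := by
      apply le_antisymm
      · exact Nat.find_le ⟨by omega, by
          have h1 : (i - 1) - ((n - 1 : ℕ) : ℤ) = i - (n : ℤ) := by
            have : ((n - 1 : ℕ) : ℤ) = (n : ℤ) - 1 := by omega
            rw [this]; ring
          rw [h1]; exact hny⟩
      · rw [Nat.le_find_iff]
        intro m hm hPm
        obtain ⟨hmp, hmy⟩ := hPm
        have hPi : P28 y p i (m + 1) := ⟨by omega, by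
          have h1 : i - ((m + 1 : ℕ) : ℤ) = (i - 1) - (m : ℤ) := by push_cast; ring
          rw [h1]; exact hmy⟩
        have h5 := Nat.find_le (h := hE) hPi
        omega
    rw [hfind]
    have h2 : (i - 1) - ((n - 1 : ℕ) : ℤ) - 1 = i - (n : ℤ) - 1 := by
      have : ((n - 1 : ℕ) : ℤ) = (n : ℤ) - 1 := by omega
      rw [this]; ring
    rw [h2]
  · have hE' : ¬ ∃ m, P28 y p (i - 1) m := by
      rintro ⟨m, hmp, hmy⟩
      by_cases hm1 : m + 1 < p
      · exact hE ⟨m + 1, ⟨hm1, by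
          have h1 : i - ((m + 1 : ℕ) : ℤ) = (i - 1) - (m : ℤ) := by push_cast; ring
          rw [h1]; exact hmy⟩⟩
      · have hmeq : m = p - 1 := by omega
        have h1 : (i - 1) - (m : ℤ) = i - (p : ℤ) := by omega
        rw [h1] at hmy
        have h2 := hper (i - p)
        have h3 : i - (p : ℤ) + (p : ℤ) = i := by ring
        rw [h3] at h2
        rw [h2] at hy
        rw [hy] at hmy
        exact Bool.false_ne_true hmy
    rw [L28, L28, dif_neg hE, dif_neg hE']

lemma L28_per (y : ℤ → Bool) (p : ℕ) (hper : ∀ i, y (i + p) = y i) (i : ℤ) :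
    L28 y p (i + p) = L28 y p i := by
  classical
  have hPiff : ∀ n, P28 y p (i + p) n ↔ P28 y p i n := by
    intro n
    have h1 : (i + p) - (n : ℤ) = (i - n) + p := by ring
    unfold P28
    rw [h1, hper (i - n)]
  by_cases hE : ∃ n, P28 y p i n
  · have hE2 : ∃ n, P28 y p (i + p) n := hE.imp fun n h => (hPiff n).2 h
    rw [L28, L28, dif_pos hE2, dif_pos hE]
    have hfind : Nat.find hE2 = Nat.find hE :=
      le_antisymm (Nat.find_le ((hPiff _).2 (Nat.find_spec hE)))
        (Nat.find_le ((hPiff _).1 (Nat.find_spec hE2)))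
    rw [hfind]
    have h2 : (i + p) - (Nat.find hE : ℤ) - 1 = (i - (Nat.find hE : ℤ) - 1) + p := by ring
    rw [h2, hper]
  · have hE2 : ¬ ∃ n, P28 y p (i + p) n := fun h => hE (h.imp fun n hh => (hPiff n).1 hh)
    rw [L28, L28, dif_neg hE2, dif_neg hE]

lemma shiftMap_iterate {A : Type*} (w : ℤ → A) (k : ℕ) (i : ℤ) :
    shiftMap^[k] w i = w (i + k) := by
  induction k generalizing w i with
  | zero => simp
  | succ k ih =>
    rw [Function.iterate_succ_apply, ih]
    show w (i + k + 1) = w (i + (k + 1 : ℕ))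
    congr 1
    push_cast
    ring

/-- ECA 28 satisfies the weak periodic point condition: for every `p ≥ 1`,
every point `y` in the image of `f` with `σ^p(y) = y` has an `f`-preimage `x`
with `σ^p(x) = x`. -/
theorem stmt16 (f : (ℤ → Bool) → (ℤ → Bool))
    (hf : ∀ (x : ℤ → Bool) (i : ℤ), f x i = true ↔
      (x (i - 1), x i, x (i + 1)) = (false, true, false) ∨
      (x (i - 1), x i, x (i + 1)) = (false, true, true) ∨
      (x (i - 1), x i, x (i + 1)) = (true, false, false)) :
    ∀ p : ℕ, 1 ≤ p → ∀ y : ℤ → Bool, y ∈ Set.range f → shiftMap^[p] y = y →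
      ∃ x : ℤ → Bool, f x = y ∧ shiftMap^[p] x = x := by
  intro p hp y hyr hyper
  obtain ⟨z, hz⟩ := hyr
  classical
  -- the local rule, in Bool form
  have hrule : ∀ (w : ℤ → Bool) (i : ℤ),
      f w i = (!w (i - 1) && w i || (w (i - 1) && !w i && !w (i + 1))) := by
    intro w i
    have h := hf w i
    cases h1 : w (i - 1) <;> cases h2 : w i <;> cases h3 : w (i + 1) <;>
      simp [h1, h2, h3, Prod.ext_iff] at h ⊢ <;> simp [h]
  have hy : ∀ i, y i = (!z (i - 1) && z i || (z (i - 1) && !z i && !z (i + 1))) := by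
    intro i; rw [← hz]; exact hrule z i
  have hper : ∀ i, y (i + p) = y i := by
    intro i
    conv_rhs => rw [← hyper]
    rw [shiftMap_iterate]
  -- no three consecutive ones in the image
  have h111 : ∀ i, y i = true → y (i + 1) = true → y (i + 2) = false := by
    intro i ha hb
    have e0 := hy i
    have e1 := hy (i + 1)
    have e2 := hy (i + 2)
    simp only [show i + 1 - 1 = i by ring, show i + 1 + 1 = i + 2 by ring,
      show i + 2 - 1 = i + 1 by ring, show i + 2 + 1 = i + 3 by ring] at e1 e2
    rw [e0] at ha
    rw [e1] at hb
    rw [e2]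
    cases hz1 : z (i - 1) <;> cases hz2 : z i <;> cases hz3 : z (i + 1) <;>
      cases hz4 : z (i + 2) <;> cases hz5 : z (i + 3) <;> simp_all
  refine ⟨X28 y p, ?_, ?_⟩
  · -- f (X28 y p) = y
    funext i
    rw [hrule (X28 y p) i]
    have hxm : X28 y p (i - 1) = (L28 y p (i - 1) && !(y i && !y (i - 1))) := by
      rw [X28, show i - 1 + 1 = i by ring]
    have hxi : X28 y p i = (L28 y p i && !(y (i + 1) && !y i)) := rfl
    have hxp : X28 y p (i + 1) = (L28 y p (i + 1) && !(y (i + 2) && !y (i + 1))) := by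
      rw [X28, show i + 1 + 1 = i + 2 by ring]
    cases hyi : y i
    · -- y i = 0
      by_cases hE : ∃ n, P28 y p i n
      · have hL : L28 y p i = L28 y p (i - 1) := L28_of_zero y p hper i hyi
        cases hLi : L28 y p i
        · rw [hxm, hxi, ← hL, hLi]
          simp
        · cases hy1 : y (i + 1)
          · rw [hxm, hxi, ← hL, hLi, hyi, hy1]
            simp
          · have hL1 : L28 y p (i + 1) = !y i :=
              by rw [L28_of_one y p hp (i + 1) hy1, show i + 1 - 1 = i by ring]
            rw [hxm, hxi, hxp, ← hL, hLi, hyi, hy1, hL1]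
            simp [hyi]
      · have hL0 : L28 y p i = false := by rw [L28, dif_neg hE]
        have hE' : ¬ ∃ m, P28 y p (i - 1) m := by
          rintro ⟨m, hmp, hmy⟩
          by_cases hm1 : m + 1 < p
          · exact hE ⟨m + 1, ⟨hm1, by
              have h1 : i - ((m + 1 : ℕ) : ℤ) = (i - 1) - (m : ℤ) := by push_cast; ring
              rw [h1]; exact hmy⟩⟩
          · have h1 : (i - 1) - (m : ℤ) = i - (p : ℤ) := by omega
            rw [h1] at hmy
            have h2 := hper (i - p)
            rw [show i - (p : ℤ) + (p : ℤ) = i by ring] at h2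
            rw [← h2, hyi] at hmy
            exact Bool.false_ne_true hmy
        have hLm : L28 y p (i - 1) = false := by rw [L28, dif_neg hE']
        rw [hxm, hxi, hL0, hLm]
        simp [hyi]
    · -- y i = 1
      cases hym : y (i - 1)
      · -- start of a run of ones
        have hLi : L28 y p i = true := by rw [L28_of_one y p hp i hyi, hym]; rfl
        rw [hxm, hxi, hLi, hyi, hym]
        simp
      · -- second one of a pair: a long run of zeros starts here
        have hy1 : y (i + 1) = false := by
          have := h111 (i - 1) hym (by rw [show i - 1 + 1 = i by ring]; exact hyi)
          rw [show i - 1 + 2 = i + 1 by ring] at this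
          exact this
        have hy2 : y (i - 2) = false := by
          cases h : y (i - 2)
          · rfl
          · have := h111 (i - 2) h (by rw [show i - 2 + 1 = i - 1 by ring]; exact hym)
            rw [show i - 2 + 2 = i by ring, hyi] at this
            exact absurd this (by simp)
        have hLm : L28 y p (i - 1) = true := by
          rw [L28_of_one y p hp (i - 1) hym, show i - 1 - 1 = i - 2 by ring, hy2]; rfl
        have hLi : L28 y p i = false := by
          rw [L28_of_one y p hp i hyi, hym]; rfl
        have hL1 : L28 y p (i + 1) = false := by
          rw [L28_of_zero y p hper (i + 1) hy1, show i + 1 - 1 = i by ring, hLi]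
        rw [hxm, hxi, hxp, hLm, hLi, hL1, hyi, hym]
        simp
  · -- periodicity
    funext i
    rw [shiftMap_iterate]
    rw [X28, X28, L28_per y p hper i, show i + (p : ℤ) + 1 = (i + 1) + p by ring,
      hper (i + 1), hper i]
end

section
/- The image of the elementary cellular automaton f with Wolfram number 28 (f(x)_i = 1 iff (x_{i-1}, x_i, x_{i+1}) ∈ {(0,1,0), (0,1,1), (1,0,0)}) is exactly the subshift of finite type defined by the single forbidden word 111, i.e. f({0,1}^ℤ) = { y ∈ {0,1}^ℤ : there is no i with y_i = y_{i+1} = y_{i+2} = 1 }. -/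
/-- The nearest `1` strictly to the left of `i` in `y` exists and is a
"single" one (preceded by a `0`). -/
def Pprop (y : ℤ → Bool) (i : ℤ) : Prop :=
  ∃ j < i, y (j - 1) = false ∧ y j = true ∧ ∀ k, j < k → k ≤ i → y k = false

open Classical in
/-- Boolean version of `Pprop`. -/
noncomputable def PB (y : ℤ → Bool) (i : ℤ) : Bool := decide (Pprop y i)

lemma PF1 {y : ℤ → Bool} {i : ℤ} (h : Pprop y i) : y i = false := by
  obtain ⟨j, hj, _, _, hall⟩ := h
  exact hall i hj le_rfl

lemma Pstep (y : ℤ → Bool) (i : ℤ) :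
    Pprop y i ↔ (y i = false ∧ (Pprop y (i - 1) ∨ (y (i - 2) = false ∧ y (i - 1) = true))) := by
  constructor
  · rintro ⟨j, hj, h0, h1, hall⟩
    have hyi : y i = false := hall i hj le_rfl
    refine ⟨hyi, ?_⟩
    rcases eq_or_lt_of_le (by omega : j ≤ i - 1) with h | h
    · right
      refine ⟨?_, ?_⟩
      · rw [show i - 2 = j - 1 by omega]; exact h0
      · rw [show i - 1 = j by omega]; exact h1
    · left
      exact ⟨j, h, h0, h1, fun k hk1 hk2 => hall k hk1 (by omega)⟩
  · rintro ⟨hyi, hor⟩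
    rcases hor with ⟨j, hj, h0, h1, hall⟩ | ⟨h0, h1⟩
    · refine ⟨j, by omega, h0, h1, fun k hk1 hk2 => ?_⟩
      rcases eq_or_lt_of_le hk2 with h | h
      · subst h; exact hyi
      · exact hall k hk1 (by omega)
    · refine ⟨i - 1, by omega, by rw [show i - 1 - 1 = i - 2 by ring]; exact h0, h1,
        fun k hk1 hk2 => ?_⟩
      have : k = i := by omega
      subst this; exact hyi

lemma PBstep (y : ℤ → Bool) (i : ℤ) :
    PB y i = (!(y i) && (PB y (i - 1) || (!(y (i - 2)) && y (i - 1)))) := by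
  classical
  by_cases h : Pprop y i
  · obtain ⟨h1, h2⟩ := (Pstep y i).mp h
    have hPB : PB y i = true := by unfold PB; exact decide_eq_true h
    rcases h2 with h2 | ⟨h3, h4⟩
    · have h2' : PB y (i - 1) = true := by unfold PB; exact decide_eq_true h2
      simp [hPB, h1, h2']
    · simp [hPB, h1, h3, h4]
  · have hPB : PB y i = false := by unfold PB; exact decide_eq_false h
    rw [hPB]
    cases h1 : y i
    · have h2 : ¬(Pprop y (i - 1) ∨ (y (i - 2) = false ∧ y (i - 1) = true)) :=
        fun hc => h ((Pstep y i).mpr ⟨h1, hc⟩)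
      push_neg at h2
      obtain ⟨h3, h4⟩ := h2
      have h3' : PB y (i - 1) = false := by unfold PB; exact decide_eq_false h3
      rw [h3']
      cases hA : y (i - 2) <;> cases hB : y (i - 1) <;> simp_all
    · simp

open Classical in
/-- A preimage of `y` (avoiding `111`) under ECA 28. -/
noncomputable def xdef (y : ℤ → Bool) (i : ℤ) : Bool :=
  ((!y (i - 1)) && y i) || ((!y i) && (!y (i + 1)) && PB y i)

/-- The image of ECA 28 is exactly the SFT defined by the single forbidden
word `111`. -/
theorem stmt17 (f : (ℤ → Bool) → (ℤ → Bool))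
    (hf : ∀ (x : ℤ → Bool) (i : ℤ), f x i = true ↔
      (x (i - 1), x i, x (i + 1)) = (false, true, false) ∨
      (x (i - 1), x i, x (i + 1)) = (false, true, true) ∨
      (x (i - 1), x i, x (i + 1)) = (true, false, false)) :
    Set.range f =
      {y : ℤ → Bool | ¬ ∃ i : ℤ, y i = true ∧ y (i + 1) = true ∧ y (i + 2) = true} := by
  ext y
  simp only [Set.mem_range, Set.mem_setOf_eq]
  constructor
  · rintro ⟨x, rfl⟩ ⟨i, h1, h2, h3⟩
    have h1' := (hf x i).mp h1
    have h2' := (hf x (i + 1)).mp h2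
    have h3' := (hf x (i + 2)).mp h3
    rw [show i + 1 - 1 = i by ring, show i + 1 + 1 = i + 2 by ring] at h2'
    rw [show i + 2 - 1 = i + 1 by ring] at h3'
    simp only [Prod.mk.injEq] at h1' h2' h3'
    rcases h1' with ⟨a1, a2, a3⟩ | ⟨a1, a2, a3⟩ | ⟨a1, a2, a3⟩ <;>
      rcases h2' with ⟨b1, b2, b3⟩ | ⟨b1, b2, b3⟩ | ⟨b1, b2, b3⟩ <;>
        rcases h3' with ⟨c1, c2, c3⟩ | ⟨c1, c2, c3⟩ | ⟨c1, c2, c3⟩ <;> simp_all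
  · intro hy
    classical
    push_neg at hy
    refine ⟨xdef y, ?_⟩
    funext i
    -- facts about forbidden word 111
    have w1 := hy (i - 2)
    have w2 := hy (i - 1)
    have w3 := hy i
    rw [show i - 2 + 1 = i - 1 by ring, show i - 2 + 2 = i by ring] at w1
    rw [show i - 1 + 1 = i by ring, show i - 1 + 2 = i + 1 by ring] at w2
    -- expressions for xdef
    have hxm : xdef y (i - 1) =
        ((!y (i - 2)) && y (i - 1) || ((!y (i - 1)) && (!y i) && PB y (i - 1))) := by
      unfold xdef
      rw [show i - 1 - 1 = i - 2 by ring, show i - 1 + 1 = i by ring]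
    have hxi : xdef y i =
        ((!y (i - 1)) && y i || ((!y i) && (!y (i + 1)) && PB y i)) := rfl
    have hxi1 : xdef y (i + 1) =
        ((!y i) && y (i + 1) || ((!y (i + 1)) && (!y (i + 2)) && PB y (i + 1))) := by
      unfold xdef
      rw [show i + 1 - 1 = i by ring, show i + 1 + 1 = i + 2 by ring]
    have hq : PB y i = (!(y i) && (PB y (i - 1) || (!(y (i - 2)) && y (i - 1)))) := PBstep y i
    have hq1 : PB y (i + 1) = (!(y (i + 1)) && (PB y i || (!(y (i - 1)) && y i))) := by
      have := PBstep y (i + 1)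
      rwa [show i + 1 - 1 = i by ring, show i + 1 - 2 = i - 1 by ring] at this
    rw [hq] at hxi
    rw [hq1, hq] at hxi1
    have hp : PB y (i - 1) = true → y (i - 1) = false := by
      intro h
      unfold PB at h
      exact PF1 (of_decide_eq_true h)
    -- reduce to boolean case analysis
    rw [Bool.eq_iff_iff, hf (xdef y) i, hxm, hxi, hxi1]
    simp only [Prod.mk.injEq]
    cases hA : y (i - 2) <;> cases hB : y (i - 1) <;> cases hC : y i <;>
      cases hD : y (i + 1) <;> cases hE : y (i + 2) <;> cases hP : PB y (i - 1) <;>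
        simp_all
end
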